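/- Fix a term order ≺ on ℕ^d. Let S₁ and S₂ be affine semigroups in ℕ^d that are both ≺-almost symmetric with |PF(S₁)| ≥ 2 and |PF(S₂)| ≥ 2, and suppose S = S₁ +_c S₂ is a gluing of S₁ and S₂. Then S is not ≺-almost symmetric. -/
import Mathlib


open Finset BigOperators

/-! Basic notions for affine semigroups in `ℕ^d`, following
"Affine semigroups of maximal projective dimension". -/

def natToQ {d : ℕ} (x : Fin d → ℕ) : Fin d → ℚ := fun i => (x i : ℚ)

def natToZ {d : ℕ} (x : Fin d → ℕ) : Fin d → ℤ := fun i => (x i : ℤ)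

/-- The rational cone spanned by an affine semigroup `S ⊆ ℕ^d`: the set of
nonnegative rational combinations of elements of `S` (equivalently, of any
generating set of `S`). -/
def cone {d : ℕ} (S : AddSubmonoid (Fin d → ℕ)) : Set (Fin d → ℚ) :=
  { q | ∃ (m : ℕ) (lam : Fin m → ℚ) (s : Fin m → Fin d → ℕ),
      (∀ i, 0 ≤ lam i) ∧ (∀ i, s i ∈ S) ∧ q = ∑ i, lam i • natToQ (s i) }

/-- `H(S) = (cone(S) \ S) ∩ ℕ^d`. -/
def HSet {d : ℕ} (S : AddSubmonoid (Fin d → ℕ)) : Set (Fin d → ℕ) :=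
  { x | natToQ x ∈ cone S ∧ x ∉ S }

/-- The set of pseudo-Frobenius elements of `S`. -/
def PF {d : ℕ} (S : AddSubmonoid (Fin d → ℕ)) : Set (Fin d → ℕ) :=
  { f | f ∈ HSet S ∧ ∀ s ∈ S, s ≠ 0 → f + s ∈ S }

/-- `A` is a minimal generating set of `S`. -/
def IsMinGenSet {d : ℕ} (A : Set (Fin d → ℕ)) (S : AddSubmonoid (Fin d → ℕ)) : Prop :=
  AddSubmonoid.closure A = S ∧ ∀ x ∈ A, x ∉ AddSubmonoid.closure (A \ {x})

/-- The family `a : Fin n → ℕ^d` is a minimal generating family (the minimal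
generating set) of `S`. -/
def MinGen {n d : ℕ} (a : Fin n → Fin d → ℕ) (S : AddSubmonoid (Fin d → ℕ)) : Prop :=
  Function.Injective a ∧ IsMinGenSet (Set.range a) S

/-- `G(S)`: the subgroup of `ℤ^d` generated by `S`. -/
def grpOf {d : ℕ} (S : AddSubmonoid (Fin d → ℕ)) : AddSubgroup (Fin d → ℤ) :=
  AddSubgroup.closure (natToZ '' (S : Set (Fin d → ℕ)))

/-- `S = S₁ +_c S₂` is a gluing of the affine semigroups `S₁` and `S₂`. -/
structure IsGluing {d : ℕ} (S S₁ S₂ : AddSubmonoid (Fin d → ℕ)) (c : Fin d → ℕ) : Prop where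
  exists_partition : ∃ A₁ A₂ : Set (Fin d → ℕ),
    A₁.Finite ∧ A₂.Finite ∧ A₁.Nonempty ∧ A₂.Nonempty ∧ Disjoint A₁ A₂ ∧
    IsMinGenSet (A₁ ∪ A₂) S ∧ S₁ = AddSubmonoid.closure A₁ ∧ S₂ = AddSubmonoid.closure A₂
  mem₁ : c ∈ S₁
  mem₂ : c ∈ S₂
  grp : grpOf S₁ ⊓ grpOf S₂ = AddSubgroup.zmultiples (natToZ c)

/-- A term order on `ℕ^d`: a total order compatible with addition for which `0`
is the least element. -/
structure TermOrder (d : ℕ) : Type where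
  lt : (Fin d → ℕ) → (Fin d → ℕ) → Prop
  irrefl : ∀ x, ¬ lt x x
  trans : ∀ {x y z}, lt x y → lt y z → lt x z
  total : ∀ x y, x = y ∨ lt x y ∨ lt y x
  zero_lt : ∀ x, x ≠ 0 → lt 0 x
  add_compat : ∀ {x y : Fin d → ℕ} (z : Fin d → ℕ), lt x y → lt (x + z) (y + z)

/-- `F` is the Frobenius element `F(S)_≺ = max_≺ H(S)`. -/
def IsFrob {d : ℕ} (τ : TermOrder d) (S : AddSubmonoid (Fin d → ℕ)) (F : Fin d → ℕ) : Prop :=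
  F ∈ HSet S ∧ ∀ x ∈ HSet S, x ≠ F → τ.lt x F

/-- `S` is `≺`-almost symmetric. -/
def AlmostSym {d : ℕ} (τ : TermOrder d) (S : AddSubmonoid (Fin d → ℕ)) : Prop :=
  ∃ F, IsFrob τ S F ∧ ((PF S) \ {F}).Nonempty ∧
    ∀ g ∈ (PF S) \ {F}, ∃ h ∈ (PF S) \ {F}, g + h = F

/-- A row-factorization matrix of `f` relative to the generators `a`. -/
def IsRFMatrix {n d : ℕ} (a : Fin n → Fin d → ℕ) (f : Fin d → ℕ)
    (M : Matrix (Fin n) (Fin n) ℤ) : Prop :=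
  (∀ i, M i i = -1) ∧ (∀ i j, i ≠ j → 0 ≤ M i j) ∧
  (∀ i, ∑ j, M i j • natToZ (a j) = natToZ f)

/-- The monomial `x^u` in `k[x_1,…,x_n]`. -/
noncomputable def mono (k : Type*) [CommRing k] {n : ℕ} (u : Fin n → ℕ) :
    MvPolynomial (Fin n) k :=
  MvPolynomial.monomial (Finsupp.equivFunOnFinite.symm u) 1

/-- The binomial `x^u - x^v`. -/
noncomputable def binom (k : Type*) [CommRing k] {n : ℕ} (u v : Fin n → ℕ) :
    MvPolynomial (Fin n) k :=
  mono k u - mono k v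

/-- The semigroup map `π : k[x_1,…,x_n] → k[t_1,…,t_d]`, `x_i ↦ t^{a_i}`. -/
noncomputable def toricMap (k : Type*) [CommRing k] {n d : ℕ} (a : Fin n → Fin d → ℕ) :
    MvPolynomial (Fin n) k →ₐ[k] MvPolynomial (Fin d) k :=
  MvPolynomial.aeval (fun i => mono k (a i))

/-- The toric ideal `I_S = ker π`. -/
noncomputable def toricIdeal (k : Type*) [CommRing k] {n d : ℕ} (a : Fin n → Fin d → ℕ) :
    Ideal (MvPolynomial (Fin n) k) :=
  RingHom.ker (toricMap k a).toRingHom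

/-- Positive part of an integer vector. -/
def pospart {n : ℕ} (v : Fin n → ℤ) : Fin n → ℕ := fun i => (v i).toNat

/-- Negative part of an integer vector. -/
def negpart {n : ℕ} (v : Fin n → ℤ) : Fin n → ℕ := fun i => (-(v i)).toNat

/-- `p` is an RF-relation: a binomial obtained from the difference of two rows of
some RF-matrix of some pseudo-Frobenius element. -/
def IsRFRelation (k : Type*) [CommRing k] {n d : ℕ} (a : Fin n → Fin d → ℕ)
    (S : AddSubmonoid (Fin d → ℕ)) (p : MvPolynomial (Fin n) k) : Prop :=
  ∃ f ∈ PF S, ∃ M : Matrix (Fin n) (Fin n) ℤ, IsRFMatrix a f M ∧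
    ∃ i j : Fin n, i < j ∧
      p = binom k (pospart fun l => M i l - M j l) (negpart fun l => M i l - M j l)

/-- The toric ideal `I_S` is generic: it is minimally generated by binomials of
full support. -/
def IsGeneric (k : Type*) [CommRing k] {n d : ℕ} (a : Fin n → Fin d → ℕ) : Prop :=
  ∃ G : Finset (MvPolynomial (Fin n) k),
    (∀ g ∈ G, ∃ u v : Fin n → ℕ, g = binom k u v ∧ ∀ l, u l ≠ 0 ∨ v l ≠ 0) ∧
    Ideal.span (G : Set (MvPolynomial (Fin n) k)) = toricIdeal k a ∧
    ∀ G' : Finset (MvPolynomial (Fin n) k), G' ⊂ G →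
      Ideal.span (G' : Set (MvPolynomial (Fin n) k)) ≠ toricIdeal k a

/-- The Apéry set `Ap(S, x) = { y ∈ S : y - x ∈ H(S) }`. -/
def Ap {d : ℕ} (S : AddSubmonoid (Fin d → ℕ)) (x : Fin d → ℕ) : Set (Fin d → ℕ) :=
  { y | y ∈ S ∧ ∃ z ∈ HSet S, y = x + z }

/-- `UF(S)`: elements with a unique factorization in terms of the generators `a`. -/
def UF {n d : ℕ} (a : Fin n → Fin d → ℕ) : Set (Fin d → ℕ) :=
  { x | ∃! u : Fin n → ℕ, x = ∑ l, u l • a l }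

open Classical in
/-- The multivariate Hilbert series `Σ_{a ∈ S} t^a` of `S`. -/
noncomputable def hilbSeries {d : ℕ} (S : AddSubmonoid (Fin d → ℕ)) :
    MvPowerSeries (Fin d) ℤ :=
  fun e => if Finsupp.equivFunOnFinite e ∈ S then 1 else 0


/-! ### Auxiliary lemmas for Statement 3 -/

section Aux

variable {d : ℕ}

lemma natToZ_add (x y : Fin d → ℕ) : natToZ (x + y) = natToZ x + natToZ y := by
  funext i; simp [natToZ]

lemma natToZ_inj {x y : Fin d → ℕ} (h : natToZ x = natToZ y) : x = y := by
  funext i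
  have := congrFun h i
  simpa [natToZ] using this

lemma natToZ_nsmul (n : ℕ) (x : Fin d → ℕ) : natToZ (n • x) = (n : ℤ) • natToZ x := by
  funext i
  simp [natToZ, Pi.smul_apply]

lemma zsmul_natToZ {k : ℤ} (hk : 0 ≤ k) (c : Fin d → ℕ) :
    k • natToZ c = natToZ (k.toNat • c) := by
  rw [natToZ_nsmul, Int.toNat_of_nonneg hk]

lemma mem_grpOf {S : AddSubmonoid (Fin d → ℕ)} {s : Fin d → ℕ} (hs : s ∈ S) :
    natToZ s ∈ grpOf S :=
  AddSubgroup.subset_closure ⟨s, hs, rfl⟩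

lemma natToQ_add (x y : Fin d → ℕ) : natToQ (x + y) = natToQ x + natToQ y := by
  funext i; simp [natToQ]

lemma cone_add {S : AddSubmonoid (Fin d → ℕ)} {q : Fin d → ℚ} {s : Fin d → ℕ}
    (hq : q ∈ cone S) (hs : s ∈ S) : q + natToQ s ∈ cone S := by
  obtain ⟨m, lam, sf, h0, hm, heq⟩ := hq
  refine ⟨m + 1, Fin.snoc lam 1, Fin.snoc sf s, ?_, ?_, ?_⟩
  · intro i
    refine Fin.lastCases ?_ ?_ i
    · simp
    · intro j; simpa using h0 j
  · intro i
    refine Fin.lastCases ?_ ?_ i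
    · simpa using hs
    · intro j; simpa using hm j
  · rw [Fin.sum_univ_castSucc]
    simp [heq]

lemma frob_mem_PF {S : AddSubmonoid (Fin d → ℕ)} {τ : TermOrder d} {F : Fin d → ℕ}
    (hF : IsFrob τ S F) : F ∈ PF S := by
  refine ⟨hF.1, fun s hs hs0 => ?_⟩
  by_contra hns
  have hcone : natToQ (F + s) ∈ cone S := by
    rw [natToQ_add]; exact cone_add hF.1.1 hs
  have hmem : F + s ∈ HSet S := ⟨hcone, hns⟩
  have hne : F + s ≠ F := by
    intro hEq
    apply hs0
    funext i
    have := congrFun hEq i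
    simp only [Pi.add_apply, Pi.zero_apply] at this ⊢
    omega
  have h1 : τ.lt (F + s) F := hF.2 _ hmem hne
  have h2 : τ.lt F (F + s) := by
    have := τ.add_compat F (τ.zero_lt s hs0)
    simpa [add_comm] using this
  exact τ.irrefl F (τ.trans h2 h1)

/-- A `ℤ`-level notion of pseudo-Frobenius element. -/
def ZPF (T : AddSubmonoid (Fin d → ℕ)) (f : Fin d → ℤ) : Prop :=
  (¬ ∃ u ∈ T, natToZ u = f) ∧
  (∀ s ∈ T, s ≠ 0 → ∃ u ∈ T, f + natToZ s = natToZ u) ∧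
  f ∈ grpOf T

lemma key {S S₁ S₂ : AddSubmonoid (Fin d → ℕ)} {c f t₁ t₂ : Fin d → ℕ}
    (hS : S = S₁ ⊔ S₂)
    (hgrp : grpOf S₁ ⊓ grpOf S₂ = AddSubgroup.zmultiples (natToZ c))
    (hc1 : c ∈ S₁) (hc2 : c ∈ S₂) (hf : f ∈ PF S)
    (ht₁ : t₁ ∈ S₁) (ht₂ : t₂ ∈ S₂) (hdec : f + c = t₁ + t₂) :
    ZPF S₂ (natToZ t₂ - natToZ c) := by
  have hS₁le : S₁ ≤ S := hS ▸ le_sup_left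
  have hS₂le : S₂ ≤ S := hS ▸ le_sup_right
  refine ⟨?_, ?_, sub_mem (mem_grpOf ht₂) (mem_grpOf hc2)⟩
  · rintro ⟨u, hu, hEq⟩
    have h2 : u + c = t₂ := by
      apply natToZ_inj
      rw [natToZ_add, hEq]
      abel
    have hfeq : f = t₁ + u := by
      funext i
      have h1 := congrFun hdec i
      have h3 := congrFun h2 i
      simp only [Pi.add_apply] at h1 h3 ⊢
      omega
    exact hf.1.2 (hfeq ▸ add_mem (hS₁le ht₁) (hS₂le hu))
  · intro s hsS₂ hs0
    have hfs : f + s ∈ S := hf.2 s (hS₂le hsS₂) hs0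
    rw [hS] at hfs
    obtain ⟨u₁, hu₁, u₂, hu₂, hueq⟩ := AddSubmonoid.mem_sup.mp hfs
    have hz1 : natToZ u₁ + natToZ c - natToZ t₁ ∈ grpOf S₁ :=
      sub_mem (add_mem (mem_grpOf hu₁) (mem_grpOf hc1)) (mem_grpOf ht₁)
    have hzeq : natToZ u₁ + natToZ c - natToZ t₁
        = natToZ t₂ + natToZ s - natToZ u₂ := by
      funext i
      have h1 := congrFun hdec i
      have h2 := congrFun hueq i
      simp only [natToZ, Pi.add_apply, Pi.sub_apply] at h1 h2 ⊢
      omega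
    have hz2 : natToZ u₁ + natToZ c - natToZ t₁ ∈ grpOf S₂ := by
      rw [hzeq]
      exact sub_mem (add_mem (mem_grpOf ht₂) (mem_grpOf hsS₂)) (mem_grpOf hu₂)
    have hzc : natToZ u₁ + natToZ c - natToZ t₁ ∈ AddSubgroup.zmultiples (natToZ c) := by
      rw [← hgrp]; exact ⟨hz1, hz2⟩
    obtain ⟨k, hk⟩ := AddSubgroup.mem_zmultiples_iff.mp hzc
    rcases le_or_gt k 0 with hk0 | hk1
    · -- impossible: it would give `f ∈ S`
      exfalso
      have h1k : (0 : ℤ) ≤ 1 - k := by omega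
      have hz : natToZ t₁ = natToZ u₁ + (1 - k) • natToZ c := by
        have h4 : natToZ t₁ = natToZ u₁ + natToZ c - k • natToZ c := by
          rw [hk]; abel
        rw [h4, sub_smul, one_smul]
        abel
      have ht1eq : t₁ = u₁ + (1 - k).toNat • c := by
        apply natToZ_inj
        rw [natToZ_add, ← zsmul_natToZ h1k, hz]
      obtain ⟨n', hn'⟩ : ∃ n', (1 - k).toNat = n' + 1 := ⟨(1 - k).toNat - 1, by omega⟩
      have hsucc : (1 - k).toNat • c = n' • c + c := by rw [hn', succ_nsmul]
      have hfeq : f = u₁ + n' • c + t₂ := by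
        funext i
        have h1 := congrFun hdec i
        have h2 := congrFun ht1eq i
        have h3 := congrFun hsucc i
        simp only [Pi.add_apply] at h1 h2 h3 ⊢
        omega
      exact hf.1.2 (hfeq ▸ add_mem (add_mem (hS₁le hu₁)
        (hS₁le (AddSubmonoid.nsmul_mem S₁ hc1 n'))) (hS₂le ht₂))
    · obtain ⟨j, hj⟩ : ∃ j : ℕ, k = (j : ℤ) + 1 := ⟨(k - 1).toNat, by omega⟩
      refine ⟨u₂ + j • c, add_mem hu₂ (AddSubmonoid.nsmul_mem S₂ hc2 j), ?_⟩
      have hz : natToZ t₂ + natToZ s - natToZ u₂ = natToZ ((j + 1) • c) := by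
        rw [← hzeq, ← hk, hj, natToZ_nsmul]
        norm_cast
      have hsucc : (j + 1) • c = j • c + c := succ_nsmul c j
      funext i
      have h2 := congrFun hz i
      have h3 := congrFun hsucc i
      simp only [natToZ, Pi.add_apply, Pi.sub_apply] at h2 h3 ⊢
      push_cast at h2 h3 ⊢
      omega

lemma final {T : AddSubmonoid (Fin d → ℕ)} {c : Fin d → ℕ}
    (hcT : c ∈ T) (hc0 : c ≠ 0) {g' h' p' : Fin d → ℤ}
    (hg : ZPF T g') (hh : ZPF T h') (hp : ZPF T p')
    (hne : (PF T).Nonempty) {w' : Fin d → ℕ} (hw' : w' ∈ T)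
    (heq : p' = g' + h' + natToZ c + natToZ w') : False := by
  obtain ⟨w, hw, hwC⟩ := hh.2.1 c hcT hc0
  by_cases hv : w + w' = 0
  · have hw0 : w = 0 := by
      funext i
      have := congrFun hv i
      simp only [Pi.add_apply, Pi.zero_apply] at this ⊢
      omega
    have hh' : h' = -natToZ c := by
      have hz : natToZ (0 : Fin d → ℕ) = 0 := by funext i; simp [natToZ]
      rw [hw0, hz] at hwC
      exact eq_neg_of_add_eq_zero_left hwC
    obtain ⟨f₂, hf₂⟩ := hne
    have hfc : f₂ + c ∈ T := hf₂.2 c hcT hc0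
    have hfc0 : f₂ + c ≠ 0 := by
      intro hEq
      apply hc0
      funext i
      have := congrFun hEq i
      simp only [Pi.add_apply, Pi.zero_apply] at this ⊢
      omega
    obtain ⟨u, hu, huE⟩ := hh.2.1 (f₂ + c) hfc hfc0
    have hfu : f₂ = u := by
      apply natToZ_inj
      rw [hh', natToZ_add] at huE
      funext i
      have := congrFun huE i
      simp only [natToZ, Pi.add_apply, Pi.neg_apply] at this ⊢
      omega
    exact hf₂.1.2 (hfu ▸ hu)
  · obtain ⟨u, hu, huE⟩ := hg.2.1 (w + w') (add_mem hw hw') hv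
    apply hp.1
    refine ⟨u, hu, ?_⟩
    rw [← huE, heq, natToZ_add, ← hwC]
    abel

end Aux

/-- A gluing of two `≺`-almost symmetric semigroups, each having at
least two pseudo-Frobenius elements, is not `≺`-almost symmetric. -/
theorem gluing_not_almostSym {d : ℕ} (τ : TermOrder d)
    (S S₁ S₂ : AddSubmonoid (Fin d → ℕ)) (c : Fin d → ℕ)
    (hglue : IsGluing S S₁ S₂ c)
    (h1 : AlmostSym τ S₁) (h2 : AlmostSym τ S₂)
    (hn1 : (PF S₁).Nontrivial) (hn2 : (PF S₂).Nontrivial) :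
    ¬ AlmostSym τ S := by
  rintro ⟨F, hF, ⟨g, hgmem⟩, hpair⟩
  obtain ⟨A₁, A₂, hA1f, hA2f, hA1ne, hA2ne, hdisj, hmin, hS₁, hS₂⟩ := hglue.exists_partition
  have hS : S = S₁ ⊔ S₂ := by
    rw [hS₁, hS₂, ← AddSubmonoid.closure_union]
    exact hmin.1.symm
  have hS₁le : S₁ ≤ S := hS ▸ le_sup_left
  have hS₂le : S₂ ≤ S := hS ▸ le_sup_right
  have hgrp := hglue.grp
  have hgP : g ∈ PF S := hgmem.1
  by_cases hc0 : c = 0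
  · -- trivial gluing: `PF S` is empty, contradicting membership of `g`
    subst hc0
    have hzero : ∀ x ∈ A₁ ∪ A₂, x ≠ 0 := by
      intro x hx hx0
      exact hmin.2 x hx (hx0 ▸ zero_mem _)
    obtain ⟨a₁, ha₁A⟩ := hA1ne
    obtain ⟨a₂, ha₂A⟩ := hA2ne
    have ha₁S : a₁ ∈ S₁ := hS₁ ▸ AddSubmonoid.subset_closure ha₁A
    have ha₂S : a₂ ∈ S₂ := hS₂ ▸ AddSubmonoid.subset_closure ha₂A
    have ha₁0 : a₁ ≠ 0 := hzero a₁ (Or.inl ha₁A)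
    have ha₂0 : a₂ ≠ 0 := hzero a₂ (Or.inr ha₂A)
    have hga₁ : g + a₁ ∈ S := hgP.2 a₁ (hS₁le ha₁S) ha₁0
    have hga₂ : g + a₂ ∈ S := hgP.2 a₂ (hS₂le ha₂S) ha₂0
    rw [hS] at hga₁ hga₂
    obtain ⟨u₁, hu₁, u₂, hu₂, hueq⟩ := AddSubmonoid.mem_sup.mp hga₁
    obtain ⟨v₁, hv₁, v₂, hv₂, hveq⟩ := AddSubmonoid.mem_sup.mp hga₂
    have hz1 : natToZ u₁ - natToZ v₁ - natToZ a₁ ∈ grpOf S₁ :=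
      sub_mem (sub_mem (mem_grpOf hu₁) (mem_grpOf hv₁)) (mem_grpOf ha₁S)
    have hzeq : natToZ u₁ - natToZ v₁ - natToZ a₁
        = natToZ v₂ - natToZ u₂ - natToZ a₂ := by
      funext i
      have hq1 := congrFun hueq i
      have hq2 := congrFun hveq i
      simp only [natToZ, Pi.add_apply, Pi.sub_apply] at hq1 hq2 ⊢
      omega
    have hz2 : natToZ u₁ - natToZ v₁ - natToZ a₁ ∈ grpOf S₂ := by
      rw [hzeq]
      exact sub_mem (sub_mem (mem_grpOf hv₂) (mem_grpOf hu₂)) (mem_grpOf ha₂S)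
    have hzc : natToZ u₁ - natToZ v₁ - natToZ a₁
        ∈ AddSubgroup.zmultiples (natToZ (0 : Fin d → ℕ)) := by
      rw [← hgrp]; exact ⟨hz1, hz2⟩
    obtain ⟨k, hk⟩ := AddSubgroup.mem_zmultiples_iff.mp hzc
    have hz0 : natToZ u₁ - natToZ v₁ - natToZ a₁ = 0 := by
      rw [← hk]
      have hnz : natToZ (0 : Fin d → ℕ) = 0 := by funext i; simp [natToZ]
      rw [hnz, smul_zero]
    have hgeq : g = v₁ + u₂ := by
      funext i
      have hq1 := congrFun hueq i
      have hq2 := congrFun hveq i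
      have hq3 := congrFun hz0 i
      simp only [natToZ, Pi.add_apply, Pi.sub_apply, Pi.zero_apply] at hq1 hq2 hq3 ⊢
      omega
    exact hgP.1.2 (hgeq ▸ add_mem (hS₁le hv₁) (hS₂le hu₂))
  · have hc1 : c ∈ S₁ := hglue.mem₁
    have hc2 : c ∈ S₂ := hglue.mem₂
    have hcS : c ∈ S := hS₁le hc1
    obtain ⟨h, hhmem, hsum⟩ := hpair g hgmem
    have hhP : h ∈ PF S := hhmem.1
    have hFP : F ∈ PF S := frob_mem_PF hF
    have hS' : S = S₂ ⊔ S₁ := by rw [hS, sup_comm]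
    have hgrp' : grpOf S₂ ⊓ grpOf S₁ = AddSubgroup.zmultiples (natToZ c) := by
      rw [inf_comm]; exact hgrp
    have hdecomp : ∀ f : Fin d → ℕ, f ∈ PF S → ∃ t₁, t₁ ∈ S₁ ∧ ∃ t₂, t₂ ∈ S₂ ∧
        f + c = t₁ + t₂ ∧ ZPF S₁ (natToZ t₁ - natToZ c) ∧
        ZPF S₂ (natToZ t₂ - natToZ c) := by
      intro f hf
      have hfc : f + c ∈ S := hf.2 c hcS hc0
      rw [hS] at hfc
      obtain ⟨t₁, ht₁, t₂, ht₂, hteq⟩ := AddSubmonoid.mem_sup.mp hfc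
      refine ⟨t₁, ht₁, t₂, ht₂, hteq.symm, ?_, ?_⟩
      · exact key hS' hgrp' hc2 hc1 hf ht₂ ht₁
          (by rw [add_comm t₂ t₁]; exact hteq.symm)
      · exact key hS hgrp hc1 hc2 hf ht₁ ht₂ hteq.symm
    obtain ⟨gt₁, hgt₁, gt₂, hgt₂, hgdec, hg1, hg2⟩ := hdecomp g hgP
    obtain ⟨ht₁', hht₁, ht₂', hht₂, hhdec, hh1, hh2⟩ := hdecomp h hhP
    obtain ⟨pt₁, hpt₁, pt₂, hpt₂, hpdec, hp1, hp2⟩ := hdecomp F hFP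
    have hx1 : (natToZ gt₁ - natToZ c) + (natToZ ht₁' - natToZ c) + natToZ c
        - (natToZ pt₁ - natToZ c) ∈ grpOf S₁ :=
      sub_mem (add_mem (add_mem (sub_mem (mem_grpOf hgt₁) (mem_grpOf hc1))
        (sub_mem (mem_grpOf hht₁) (mem_grpOf hc1))) (mem_grpOf hc1))
        (sub_mem (mem_grpOf hpt₁) (mem_grpOf hc1))
    have hxeq : (natToZ gt₁ - natToZ c) + (natToZ ht₁' - natToZ c) + natToZ c
        - (natToZ pt₁ - natToZ c)
        = (natToZ pt₂ - natToZ c) - (natToZ gt₂ - natToZ c)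
          - (natToZ ht₂' - natToZ c) := by
      funext i
      have e1 := congrFun hgdec i
      have e2 := congrFun hhdec i
      have e3 := congrFun hpdec i
      have e4 := congrFun hsum i
      simp only [natToZ, Pi.add_apply, Pi.sub_apply] at e1 e2 e3 e4 ⊢
      omega
    have hx2 : (natToZ gt₁ - natToZ c) + (natToZ ht₁' - natToZ c) + natToZ c
        - (natToZ pt₁ - natToZ c) ∈ grpOf S₂ := by
      rw [hxeq]
      exact sub_mem (sub_mem (sub_mem (mem_grpOf hpt₂) (mem_grpOf hc2))
        (sub_mem (mem_grpOf hgt₂) (mem_grpOf hc2)))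
        (sub_mem (mem_grpOf hht₂) (mem_grpOf hc2))
    have hxc : (natToZ gt₁ - natToZ c) + (natToZ ht₁' - natToZ c) + natToZ c
        - (natToZ pt₁ - natToZ c) ∈ AddSubgroup.zmultiples (natToZ c) := by
      rw [← hgrp]; exact ⟨hx1, hx2⟩
    obtain ⟨k, hk⟩ := AddSubgroup.mem_zmultiples_iff.mp hxc
    rcases le_or_gt 1 k with hk1 | hk0
    · -- contradiction on the `S₂` side
      refine final hc2 hc0 hg2 hh2 hp2 hn2.nonempty
        (AddSubmonoid.nsmul_mem S₂ hc2 (k - 1).toNat) ?_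
      have h6 : natToZ pt₂ - natToZ c
          = (natToZ gt₂ - natToZ c) + (natToZ ht₂' - natToZ c) + k • natToZ c := by
        rw [hk, hxeq]; abel
      have h5 : k • natToZ c = natToZ c + natToZ ((k - 1).toNat • c) := by
        rw [← zsmul_natToZ (by omega : (0 : ℤ) ≤ k - 1)]
        have h7 : k = 1 + (k - 1) := by omega
        rw [h7, add_smul, one_smul]
        ring_nf
      rw [h6, h5]
      abel
    · -- contradiction on the `S₁` side
      refine final hc1 hc0 hg1 hh1 hp1 hn1.nonempty
        (AddSubmonoid.nsmul_mem S₁ hc1 (-k).toNat) ?_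
      have h6 : natToZ pt₁ - natToZ c
          = (natToZ gt₁ - natToZ c) + (natToZ ht₁' - natToZ c) + natToZ c
            + (-k) • natToZ c := by
        rw [neg_smul, hk]; abel
      have h5 : (-k) • natToZ c = natToZ ((-k).toNat • c) :=
        zsmul_natToZ (by omega : (0 : ℤ) ≤ -k) c
      rw [h6, h5]
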